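/- arXiv:1309.2069 — 5 statements merged into one kernel-verified Lean document; each statement's English description precedes it below -/
import Mathlib

section
/- Let O be a monotone operation on subsets of a set D, and O' a monotone operation on subsets of a set D'. Suppose Z ⊆ D × D' is a relation such that for all A ⊆ D, A' ⊆ D' with the property that for all (a,b) ∈ Z, a ∈ A ⟺ b ∈ A', it holds that for all (a,b) ∈ Z, a ∈ O(A) ⟺ b ∈ O'(A'). Then for all ordinals λ and all (a,b) ∈ Z, a ∈ O^λ(∅) ⟺ b ∈ O'^λ(∅); in particular a belongs to the least fixed point of O if and only if b belongs to the least fixed point of O'. -/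
/-- Transfinite iteration of a set operator starting from the empty set:
`∅` at stage 0, apply `O` at successors, union at limits. -/
noncomputable def iterO {D : Type} (O : Set D → Set D) (o : Ordinal) : Set D :=
  Ordinal.limitRecOn o ∅ (fun _ ih => O ih)
    (fun o _ ih => ⋃ p : {o' : Ordinal // o' < o}, ih p.1 p.2)

/-!
The hypothesis says that `O` and `O'` preserve agreement along `Z`, and agreement along `Z` is
preserved by unions, so transfinite induction gives agreement at every stage. For monotone
operators the stages are the approximants `OrdinalApprox.lfpApprox` from `⊥`, which reach the
least fixed point at `ord (succ #(Set D))` and stay there; a stage past both closure ordinals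
therefore compares the two least fixed points.
-/

universe u

section Iteration

variable {D : Type} (O : Set D → Set D)

lemma iterO_zero : iterO O (0 : Ordinal.{u}) = ∅ :=
  Ordinal.limitRecOn_zero _ _ _

lemma iterO_add_one (o : Ordinal.{u}) : iterO O (o + 1) = O (iterO O o) :=
  Ordinal.limitRecOn_add_one _ _ _ _

lemma iterO_of_isSuccLimit {o : Ordinal.{u}} (h : Order.IsSuccLimit o) :
    iterO O o = ⋃ p : {o' : Ordinal.{u} // o' < o}, iterO O p.1 :=
  Ordinal.limitRecOn_limit _ _ _ _ h

open OrdinalApprox in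
lemma iterO_eq_lfpApprox (hO : Monotone O) (o : Ordinal.{0}) :
    iterO O o = lfpApprox ⟨O, hO⟩ ⊥ o := by
  induction o using Ordinal.limitRecOn with
  | zero => rw [iterO_zero, lfpApprox_zero]; rfl
  | add_one o ih => rw [iterO_add_one, lfpApprox_add_one _ bot_le, ih]; rfl
  | limit o ho ih =>
    rw [iterO_of_isSuccLimit O ho, lfpApprox_of_isSuccLimit _ ho, Set.iSup_eq_iUnion]
    exact Set.iUnion_congr fun p => ih p.1 p.2

lemma iterO_eq_sInter_of_le (hO : Monotone O) {o : Ordinal.{0}}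
    (ho : (Order.succ (Cardinal.mk (Set D))).ord ≤ o) :
    iterO O o = ⋂₀ {A : Set D | O A ⊆ A} := by
  have hfix := OrdinalApprox.lfpApprox_ord_mem_fixedPoint (⟨O, hO⟩ : Set D →o Set D) bot_le
  rw [iterO_eq_lfpApprox O hO, OrdinalApprox.lfpApprox_eq_of_mem_fixedPoints _ ho hfix,
    OrdinalApprox.lfpApprox_ord_eq_lfp]
  rfl

end Iteration

section AgreeAlong

variable {D D' : Type} (Z : D → D' → Prop)

def AgreeAlong (A : Set D) (A' : Set D') : Prop :=
  ∀ a b, Z a b → (a ∈ A ↔ b ∈ A')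

lemma agreeAlong_empty : AgreeAlong Z (∅ : Set D) (∅ : Set D') :=
  fun _ _ _ => Iff.rfl

lemma agreeAlong_iUnion {ι : Sort*} {A : ι → Set D} {A' : ι → Set D'}
    (h : ∀ i, AgreeAlong Z (A i) (A' i)) : AgreeAlong Z (⋃ i, A i) (⋃ i, A' i) := by
  intro a b hab
  simp only [Set.mem_iUnion]
  exact exists_congr fun i => h i a b hab

lemma agreeAlong_iterO {O : Set D → Set D} {O' : Set D' → Set D'}
    (hZ : ∀ A A', AgreeAlong Z A A' → AgreeAlong Z (O A) (O' A')) (o : Ordinal.{u}) :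
    AgreeAlong Z (iterO O o) (iterO O' o) := by
  induction o using Ordinal.limitRecOn with
  | zero => rw [iterO_zero, iterO_zero]; exact agreeAlong_empty Z
  | add_one o ih => rw [iterO_add_one, iterO_add_one]; exact hZ _ _ ih
  | limit o ho ih =>
    rw [iterO_of_isSuccLimit O ho, iterO_of_isSuccLimit O' ho]
    exact agreeAlong_iUnion Z fun p => ih p.1 p.2

end AgreeAlong

/-- if `Z` relates two monotone operators `O`, `O'` in the sense that whenever
`A`, `A'` agree along `Z` then `O A`, `O' A'` agree along `Z`, then all stages of the
transfinite iterations agree along `Z`; in particular the least fixed points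
(the intersections of the pre-fixed points) agree along `Z`. -/
theorem lfp_invariance_along_relation {D D' : Type}
    (O : Set D → Set D) (O' : Set D' → Set D')
    (hO : Monotone O) (hO' : Monotone O')
    (Z : D → D' → Prop)
    (hZ : ∀ (A : Set D) (A' : Set D'),
      (∀ a b, Z a b → (a ∈ A ↔ b ∈ A')) →
      ∀ a b, Z a b → (a ∈ O A ↔ b ∈ O' A')) :
    (∀ (lam : Ordinal) (a : D) (b : D'), Z a b → (a ∈ iterO O lam ↔ b ∈ iterO O' lam)) ∧
    (∀ (a : D) (b : D'), Z a b →
      (a ∈ ⋂₀ {A : Set D | O A ⊆ A} ↔ b ∈ ⋂₀ {A' : Set D' | O' A' ⊆ A'})) := by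
  refine ⟨agreeAlong_iterO Z hZ, ?_⟩
  set o : Ordinal.{0} :=
    max (Order.succ (Cardinal.mk (Set D))).ord (Order.succ (Cardinal.mk (Set D'))).ord
  rw [← iterO_eq_sInter_of_le O hO (le_max_left _ _ : _ ≤ o),
    ← iterO_eq_sInter_of_le O' hO' (le_max_right _ _ : _ ≤ o)]
  exact agreeAlong_iterO Z hZ o
end

section
/- Two unranked trees are UN-bisimilar if and only if they are root-to-root bisimilar: if t and t' are (rooted, unranked) trees over a signature with one binary child relation and finitely many unary predicates, then there exists a nonempty UN-bisimulation between t and t' containing the pair of roots if and only if the roots of t and t' are related by an ordinary bisimulation between t and t'. -/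
/-- A rooted (unranked) tree: a node type with a child relation, a root, unary predicates
indexed by `P`, such that the root has no parent, parents are unique, and every node is
reachable from the root. -/
structure URTree (P : Type) where
  V : Type
  root : V
  child : V → V → Prop
  label : P → V → Prop
  root_no_parent : ∀ v, ¬ child v root
  parent_unique : ∀ ⦃u v w : V⦄, child u w → child v w → u = v
  reachable : ∀ v, Relation.ReflTransGen child root v

/-- An ordinary bisimulation between two trees: related nodes satisfy the same unary
predicates and the back-and-forth conditions hold along the child relation. -/
def IsBisim {P : Type} (t t' : URTree P) (Z : t.V → t'.V → Prop) : Prop :=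
  ∀ a b, Z a b →
    (∀ p, t.label p a ↔ t'.label p b) ∧
    (∀ a', t.child a a' → ∃ b', t'.child b b' ∧ Z a' b') ∧
    (∀ b', t'.child b b' → ∃ a', t.child a a' ∧ Z a' b')

/-- A partial homomorphism between trees with domain `X`: preserves unary predicates and the
child relation on `X`. -/
def TPartialHom {P : Type} (t t' : URTree P) (X : Set t.V) (h : t.V → t'.V) : Prop :=
  (∀ a ∈ X, ∀ p, t.label p a → t'.label p (h a)) ∧
  (∀ a ∈ X, ∀ b ∈ X, t.child a b → t'.child (h a) (h b))

/-- A UN-bisimulation between two trees. -/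
def TIsUNBisim {P : Type} (t t' : URTree P) (Z : t.V → t'.V → Prop) : Prop :=
  ∀ a b, Z a b →
    (∀ X : Set t.V, X.Finite →
      ∃ h : t.V → t'.V, TPartialHom t t' X h ∧ (a ∈ X → h a = b) ∧ ∀ x ∈ X, Z x (h x)) ∧
    (∀ Y : Set t'.V, Y.Finite →
      ∃ g : t'.V → t.V, TPartialHom t' t Y g ∧ (b ∈ Y → g b = a) ∧ ∀ y ∈ Y, Z (g y) y)


/-!
A UN-bisimulation is in particular a bisimulation: apply its defining property to `X = {a}` and
`X = {a, a'}`. Conversely, given a bisimulation `Z` relating the roots, relate `a` and `b` when the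
root paths to `a` and to `b` have the same length and are related by `Z` pointwise. For such a
pair and a finite `X`, a partial homomorphism is built on the ancestor closure of `X ∪ {a}`: along
the path to `a` it is the given path to `b`, and it is extended to the remaining nodes parent
first, by the forth property of `Z`. Since a node of a tree has only one parent, each new node
faces a single constraint, so the extension never gets stuck.
-/

open Relation

namespace URTree

variable {P : Type} (s : URTree P)

theorem wellFounded_child : WellFounded s.child := by
  refine ⟨fun v => ?_⟩
  induction s.reachable v with
  | refl => exact ⟨_, fun u hu => absurd hu (s.root_no_parent u)⟩
  | tail _ hvw ih => exact ⟨_, fun u hu => s.parent_unique hu hvw ▸ ih⟩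

theorem exists_child_of_ne_root {v : s.V} (hv : v ≠ s.root) : ∃ p, s.child p v := by
  rcases (s.reachable v).cases_tail with h | ⟨p, -, hp⟩
  · exact absurd h hv
  · exact ⟨p, hp⟩

def anc (v : s.V) : Set s.V := {u | ReflTransGen s.child u v}

theorem root_mem_anc (v : s.V) : s.root ∈ s.anc v := s.reachable v

theorem anc_root : s.anc s.root = {s.root} := by
  refine Set.eq_singleton_iff_unique_mem.mpr ⟨ReflTransGen.refl, fun u hu => ?_⟩
  rcases ReflTransGen.cases_tail (show ReflTransGen s.child u s.root from hu)
    with h | ⟨p, -, hp⟩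
  · exact h.symm
  · exact absurd hp (s.root_no_parent p)

theorem anc_of_child {p v : s.V} (hpv : s.child p v) : s.anc v = insert v (s.anc p) := by
  ext u
  refine ⟨fun hu => ?_, ?_⟩
  · rcases ReflTransGen.cases_tail (show ReflTransGen s.child u v from hu)
      with h | ⟨w, huw, hwv⟩
    · exact .inl h.symm
    · exact .inr (s.parent_unique hwv hpv ▸ huw)
  · rintro (rfl | hu)
    · exact ReflTransGen.refl
    · exact ReflTransGen.tail hu hpv

theorem not_mem_anc_of_child {p v : s.V} (hpv : s.child p v) : v ∉ s.anc p := fun hvp =>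
  s.wellFounded_child.transGen.irrefl.irrefl v (TransGen.tail' hvp hpv)

theorem anc_finite (v : s.V) : (s.anc v).Finite := by
  induction s.reachable v with
  | refl => simp [anc_root]
  | tail _ hpv ih => simpa [s.anc_of_child hpv] using ih

def AncClosed (X : Set s.V) : Prop := ∀ x ∈ X, s.anc x ⊆ X

theorem ancClosed_anc (v : s.V) : s.AncClosed (s.anc v) :=
  fun _ hx _ hu => ReflTransGen.trans hu hx

theorem ancClosed_biUnion_anc (S : Set s.V) : s.AncClosed (⋃ x ∈ S, s.anc x) := by
  intro y hy u hu
  obtain ⟨x, hxS, hyx⟩ := Set.mem_iUnion₂.mp hy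
  exact Set.mem_iUnion₂.mpr ⟨x, hxS, ReflTransGen.trans hu hyx⟩

variable {s} in
theorem AncClosed.insert {X : Set s.V} (hX : s.AncClosed X) {p v : s.V} (hpv : s.child p v)
    (hp : p ∈ X) : s.AncClosed (insert v X) := by
  rintro x (rfl | hx)
  · rw [s.anc_of_child hpv]
    exact Set.insert_subset_insert (hX p hp)
  · exact (hX x hx).trans (Set.subset_insert v X)

end URTree

variable {P : Type} {t t' : URTree P} {Z : t.V → t'.V → Prop}

theorem IsBisim.flip (hZ : IsBisim t t' Z) :
    IsBisim t' t (flip Z) := fun b a hab =>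
  let ⟨hlabel, hforth, hback⟩ := hZ a b hab
  ⟨fun p => (hlabel p).symm, hback, hforth⟩

theorem forth_of_partialHoms {a : t.V} {b : t'.V}
    (H : ∀ X : Set t.V, X.Finite →
      ∃ h : t.V → t'.V, TPartialHom t t' X h ∧ (a ∈ X → h a = b) ∧ ∀ x ∈ X, Z x (h x)) :
    (∀ p, t.label p a → t'.label p b) ∧ ∀ a', t.child a a' → ∃ b', t'.child b b' ∧ Z a' b' := by
  refine ⟨fun p hp => ?_, fun a' haa' => ?_⟩
  · obtain ⟨h, ⟨hlabel, -⟩, hhab, -⟩ := H {a} (Set.finite_singleton a)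
    simpa [hhab rfl] using hlabel a rfl p hp
  · obtain ⟨h, ⟨-, hchild⟩, hhab, hZ⟩ := H {a, a'} (Set.toFinite _)
    refine ⟨h a', ?_, hZ a' (by simp)⟩
    simpa [hhab (by simp)] using hchild a (by simp) a' (by simp) haa'

theorem TIsUNBisim.isBisim (hZ : TIsUNBisim t t' Z) : IsBisim t t' Z := by
  intro a b hab
  obtain ⟨hlabel, hforth⟩ := forth_of_partialHoms (hZ a b hab).1
  obtain ⟨hlabel', hback⟩ := forth_of_partialHoms (Z := flip Z) (hZ a b hab).2
  exact ⟨fun p => ⟨hlabel p, hlabel' p⟩, hforth, hback⟩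

inductive SyncPath (t t' : URTree P) (Z : t.V → t'.V → Prop) : t.V → t'.V → Prop
  | root : Z t.root t'.root → SyncPath t t' Z t.root t'.root
  | child {a b a' b'} : SyncPath t t' Z a b → t.child a a' → t'.child b b' → Z a' b' →
      SyncPath t t' Z a' b'

namespace SyncPath

theorem rel {a b} (hab : SyncPath t t' Z a b) : Z a b := by
  cases hab with
  | root h => exact h
  | child _ _ _ h => exact h

theorem flip {a b} (hab : SyncPath t t' Z a b) : SyncPath t' t (flip Z) b a := by
  induction hab with
  | root h => exact .root h
  | child _ haa' hbb' hZ ih => exact .child ih hbb' haa' hZ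

end SyncPath

def IsSyncHomOn (Z : t.V → t'.V → Prop) (X : Set t.V) (h : t.V → t'.V) : Prop :=
  (∀ x ∈ X, ∀ y ∈ X, t.child x y → t'.child (h x) (h y)) ∧ ∀ x ∈ X, SyncPath t t' Z x (h x)

namespace IsSyncHomOn

variable {X : Set t.V} {h : t.V → t'.V}

theorem mono {Y : Set t.V} (hh : IsSyncHomOn Z X h) (hYX : Y ⊆ X) : IsSyncHomOn Z Y h :=
  ⟨fun x hx y hy => hh.1 x (hYX hx) y (hYX hy), fun x hx => hh.2 x (hYX hx)⟩

open Classical in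
theorem update (hh : IsSyncHomOn Z X h) (hX : t.AncClosed X) {p v : t.V} {b' : t'.V}
    (hpv : t.child p v) (hp : p ∈ X) (hv : v ∉ X) (hb' : t'.child (h p) b') (hZ : Z v b') :
    IsSyncHomOn Z (insert v X) (Function.update h v b') := by
  have hpv_ne : p ≠ v := fun h => hv (h ▸ hp)
  have hchild_not_mem : ∀ y ∈ X, ¬ t.child v y := fun y hy hvy =>
    hv (hX y hy (ReflTransGen.single hvy))
  refine ⟨?_, ?_⟩
  · rintro x (rfl | hx) y (rfl | hy) hxy
    · exact absurd (t.parent_unique hxy hpv ▸ hp) hv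
    · exact absurd hxy (hchild_not_mem y hy)
    · obtain rfl := t.parent_unique hxy hpv
      simpa [hpv_ne] using hb'
    · have hxv : x ≠ v := fun h => hv (h ▸ hx)
      have hyv : y ≠ v := fun h => hv (h ▸ hy)
      simpa [hxv, hyv] using hh.1 x hx y hy hxy
  · rintro x (rfl | hx)
    · simpa using SyncPath.child (hh.2 p hp) hpv hb' hZ
    · have hxv : x ≠ v := fun h => hv (h ▸ hx)
      simpa [hxv] using hh.2 x hx

end IsSyncHomOn

theorem SyncPath.exists_isSyncHomOn_anc {a b} (hab : SyncPath t t' Z a b) :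
    ∃ h, IsSyncHomOn Z (t.anc a) h ∧ h a = b := by
  classical
  induction hab with
  | root hZ =>
    refine ⟨fun _ => t'.root, ⟨?_, ?_⟩, rfl⟩ <;>
      simp only [URTree.anc_root, Set.mem_singleton_iff]
    · rintro x rfl y rfl hxy
      exact absurd hxy (t.root_no_parent _)
    · rintro x rfl
      exact .root hZ
  | @child a b a' b' _ haa' hbb' hZ ih =>
    obtain ⟨h, hh, rfl⟩ := ih
    refine ⟨Function.update h a' b', ?_, Function.update_self a' b' h⟩
    rw [t.anc_of_child haa']
    exact hh.update (t.ancClosed_anc a) haa' ReflTransGen.refl (t.not_mem_anc_of_child haa')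
      hbb' hZ

theorem IsSyncHomOn.extend (hZ : IsBisim t t' Z) {X Y : Set t.V} {h : t.V → t'.V}
    (hh : IsSyncHomOn Z X h) (hX : t.AncClosed X) (hroot : t.root ∈ X) (hY : Y.Finite)
    (hYc : t.AncClosed Y) (hXY : X ⊆ Y) : ∃ h', IsSyncHomOn Z Y h' ∧ Set.EqOn h' h X := by
  classical
  obtain ⟨n, hn⟩ : ∃ n, (Y \ X).ncard = n := ⟨_, rfl⟩
  induction n generalizing X h with
  | zero =>
    have hYX : Y ⊆ X := Set.sdiff_eq_empty.mp ((Set.ncard_eq_zero hY.sdiff).mp hn)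
    exact ⟨h, hh.mono hYX, Set.eqOn_refl h X⟩
  | succ n ih =>
    obtain ⟨v, ⟨hvY, hvX⟩, hmin⟩ :=
      t.wellFounded_child.has_min _ (Set.nonempty_of_ncard_ne_zero (hn.trans_ne n.succ_ne_zero))
    obtain ⟨p, hpv⟩ := t.exists_child_of_ne_root fun hv : v = t.root => hvX (hv ▸ hroot)
    have hp : p ∈ X := by_contra fun hpX =>
      hmin p ⟨hYc v hvY (ReflTransGen.single hpv), hpX⟩ hpv
    obtain ⟨b', hb', hZb'⟩ := (hZ p (h p) (hh.2 p hp).rel).2.1 v hpv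
    have hn' : (Y \ insert v X).ncard = n := by
      rw [← Set.union_singleton, ← Set.sdiff_sdiff,
        Set.ncard_sdiff_singleton_of_mem (show v ∈ Y \ X from ⟨hvY, hvX⟩), hn, Nat.add_sub_cancel]
    obtain ⟨h', hh', heq⟩ := ih (hh.update hX hpv hp hvX hb' hZb') (hX.insert hpv hp)
      (Set.mem_insert_of_mem v hroot) (Set.insert_subset hvY hXY) hn'
    refine ⟨h', hh', fun x hx => ?_⟩
    have hxv : x ≠ v := fun h => hvX (h ▸ hx)
    simpa [hxv] using heq (Set.mem_insert_of_mem v hx)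

theorem SyncPath.exists_partialHom (hZ : IsBisim t t' Z) {a b} (hab : SyncPath t t' Z a b)
    {X : Set t.V} (hXf : X.Finite) :
    ∃ h, TPartialHom t t' X h ∧ (a ∈ X → h a = b) ∧ ∀ x ∈ X, SyncPath t t' Z x (h x) := by
  set Y := ⋃ x ∈ insert a X, t.anc x
  have hanc : ∀ x ∈ insert a X, t.anc x ⊆ Y := fun x hx => Set.subset_biUnion_of_mem hx
  have hXY : X ⊆ Y := fun x hx => hanc x (Set.mem_insert_of_mem a hx) ReflTransGen.refl
  obtain ⟨h₀, hh₀, rfl⟩ := hab.exists_isSyncHomOn_anc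
  obtain ⟨h, hh, heq⟩ := hh₀.extend hZ (t.ancClosed_anc a) (t.root_mem_anc a)
    ((hXf.insert a).biUnion fun x _ => t.anc_finite x) (t.ancClosed_biUnion_anc _)
    (hanc a (Set.mem_insert a X))
  refine ⟨h, ⟨fun x hx p hp => ?_, fun x hx y hy => hh.1 x (hXY hx) y (hXY hy)⟩,
    fun _ => heq ReflTransGen.refl, fun x hx => hh.2 x (hXY hx)⟩
  exact ((hZ x (h x) (hh.2 x (hXY hx)).rel).1 p).mp hp

theorem IsBisim.isUNBisim_syncPath (hZ : IsBisim t t' Z) : TIsUNBisim t t' (SyncPath t t' Z) :=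
  fun _ _ hab => ⟨fun _ hX => hab.exists_partialHom hZ hX, fun _ hY => by
    obtain ⟨g, hg, hgb, hgZ⟩ := hab.flip.exists_partialHom hZ.flip hY
    exact ⟨g, hg, hgb, fun y hy => (hgZ y hy).flip⟩⟩

theorem unbisim_iff_root_to_root_bisim_general {P : Type} (t t' : URTree P) :
    (∃ Z : t.V → t'.V → Prop, TIsUNBisim t t' Z ∧ Z t.root t'.root) ↔
    (∃ Z : t.V → t'.V → Prop, IsBisim t t' Z ∧ Z t.root t'.root) :=
  ⟨fun ⟨Z, hZ, hroot⟩ => ⟨Z, hZ.isBisim, hroot⟩,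
    fun ⟨Z, hZ, hroot⟩ => ⟨SyncPath t t' Z, hZ.isUNBisim_syncPath, .root hroot⟩⟩

/-- two unranked trees are UN-bisimilar (via a UN-bisimulation containing the
pair of roots) if and only if they are root-to-root bisimilar. -/
theorem unbisim_iff_root_to_root_bisim {P : Type} [Finite P] (t t' : URTree P) :
    (∃ Z : t.V → t'.V → Prop, TIsUNBisim t t' Z ∧ Z t.root t'.root) ↔
    (∃ Z : t.V → t'.V → Prop, IsBisim t t' Z ∧ Z t.root t'.root) :=
  unbisim_iff_root_to_root_bisim_general t t'
end

section
/- If t and t' are rooted trees whose roots are bisimilar, then for every node a of t at depth k, every node b of t' at depth k such that for each i ≤ k the subtree rooted at the i-th ancestor of a is root-to-root bisimilar to the subtree rooted at the i-th ancestor of b, there exists a homomorphism h from t to t' with h(a) = b. -/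
/-- A (total) homomorphism between trees: preserves unary predicates and the child relation. -/
def THom {P : Type} (t t' : URTree P) (h : t.V → t'.V) : Prop :=
  (∀ p a, t.label p a → t'.label p (h a)) ∧
  (∀ a b, t.child a b → t'.child (h a) (h b))

/-- The subtrees rooted at `u` and `v` are root-to-root bisimilar: there is a bisimulation,
supported on the descendants of `u` and `v`, relating `u` to `v`. -/
def SubtreeBisim {P : Type} (t t' : URTree P) (u : t.V) (v : t'.V) : Prop :=
  ∃ Z : t.V → t'.V → Prop,
    (∀ a b, Z a b → Relation.ReflTransGen t.child u a ∧ Relation.ReflTransGen t'.child v b) ∧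
    IsBisim t t' Z ∧ Z u v

/-!
Since every node has a unique parent and is reachable from the root, the parent relation is
well founded, so a map `h : t → t'` can be defined by recursion from the root: the ancestors of
`a` go to the corresponding ancestors of `b`, and any other node `c` with parent `p` goes to a
child of `h p` bisimilar to `c`. Such a child exists because, inductively, `p` is bisimilar to
`h p`. Parents are then mapped to parents, and bisimilar nodes carry the same labels.
-/

namespace URTree

variable {P : Type} (t : URTree P)

theorem wellFounded_child_s11 : WellFounded t.child := by
  refine ⟨fun v => ?_⟩
  induction t.reachable v with
  | refl => exact ⟨_, fun p hp => absurd hp (t.root_no_parent p)⟩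
  | @tail p c _ hpc ih => exact ⟨_, fun q hq => t.parent_unique hq hpc ▸ ih⟩

variable {t} {k : ℕ} {anc : ℕ → t.V}

theorem transGen_child_of_chain (hstep : ∀ i < k, t.child (anc (i + 1)) (anc i))
    {i j : ℕ} (hij : i < j) (hjk : j ≤ k) : Relation.TransGen t.child (anc j) (anc i) := by
  induction j, hij using Nat.le_induction with
  | base => exact .single (hstep i hjk)
  | succ j _ ih => exact .head (hstep j hjk) (ih (by omega))

theorem injOn_of_chain (hstep : ∀ i < k, t.child (anc (i + 1)) (anc i)) :
    Set.InjOn anc (Set.Iic k) := by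
  have acyclic : ∀ x, ¬ Relation.TransGen t.child x x :=
    t.wellFounded_child_s11.transGen.irrefl.irrefl
  intro i hi j hj hij
  by_contra hne
  rcases Nat.lt_or_gt_of_ne hne with h | h
  · exact acyclic _ (hij ▸ transGen_child_of_chain hstep h hj)
  · exact acyclic _ (hij ▸ transGen_child_of_chain hstep h hi)

end URTree

section Bisimilar

variable {P : Type} {t t' : URTree P}

def Bisimilar (t t' : URTree P) (x : t.V) (y : t'.V) : Prop :=
  ∃ Z, IsBisim t t' Z ∧ Z x y

theorem SubtreeBisim.bisimilar {u : t.V} {v : t'.V} (h : SubtreeBisim t t' u v) :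
    Bisimilar t t' u v :=
  let ⟨Z, _, hZ, huv⟩ := h
  ⟨Z, hZ, huv⟩

theorem Bisimilar.label_iff {x : t.V} {y : t'.V} (h : Bisimilar t t' x y) (p : P) :
    t.label p x ↔ t'.label p y :=
  let ⟨_, hZ, hxy⟩ := h
  (hZ x y hxy).1 p

theorem Bisimilar.exists_child {x x' : t.V} {y : t'.V} (h : Bisimilar t t' x y)
    (hx : t.child x x') : ∃ y', t'.child y y' ∧ Bisimilar t t' x' y' :=
  let ⟨Z, hZ, hxy⟩ := h
  let ⟨y', hy, hZ'⟩ := (hZ x y hxy).2.1 x' hx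
  ⟨y', hy, Z, hZ, hZ'⟩

open Classical in
noncomputable def bisimChild (t t' : URTree P) (c : t.V) (v : t'.V) : t'.V :=
  if h : ∃ w, t'.child v w ∧ Bisimilar t t' c w then h.choose else v

theorem Bisimilar.bisimChild_spec {p c : t.V} {v : t'.V} (h : Bisimilar t t' p v)
    (hc : t.child p c) :
    t'.child v (bisimChild t t' c v) ∧ Bisimilar t t' c (bisimChild t t' c v) := by
  have hex := h.exists_child hc
  rw [bisimChild, dif_pos hex]
  exact hex.choose_spec

end Bisimilar

section SpineLift

variable {P : Type} {t t' : URTree P} {k : ℕ} {anc : ℕ → t.V} {anc' : ℕ → t'.V}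

open Classical in
noncomputable def spineLift (t t' : URTree P) (k : ℕ) (anc : ℕ → t.V) (anc' : ℕ → t'.V) :
    t.V → t'.V :=
  t.wellFounded_child_s11.fix fun c lift =>
    if hs : ∃ i ≤ k, anc i = c then anc' hs.choose
    else if hp : ∃ p, t.child p c then bisimChild t t' c (lift hp.choose hp.choose_spec)
    else t'.root

theorem spineLift_anc (hstep : ∀ i < k, t.child (anc (i + 1)) (anc i)) {i : ℕ} (hi : i ≤ k) :
    spineLift t t' k anc anc' (anc i) = anc' i := by
  have hs : ∃ j ≤ k, anc j = anc i := ⟨i, hi, rfl⟩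
  rw [spineLift, WellFounded.fix_eq, dif_pos hs,
    URTree.injOn_of_chain hstep hs.choose_spec.1 hi hs.choose_spec.2]

theorem spineLift_of_not_mem_spine {p c : t.V} (hs : ¬ ∃ i ≤ k, anc i = c) (hpc : t.child p c) :
    spineLift t t' k anc anc' c = bisimChild t t' c (spineLift t t' k anc anc' p) := by
  have hp : ∃ p, t.child p c := ⟨p, hpc⟩
  rw [spineLift, WellFounded.fix_eq, dif_neg hs, dif_pos hp]
  exact congrArg (fun q => bisimChild t t' c (spineLift t t' k anc anc' q))
    (t.parent_unique hp.choose_spec hpc)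

theorem bisimilar_spineLift (hstep : ∀ i < k, t.child (anc (i + 1)) (anc i))
    (hak : anc k = t.root) (hsub : ∀ i ≤ k, SubtreeBisim t t' (anc i) (anc' i)) (u : t.V) :
    Bisimilar t t' u (spineLift t t' k anc anc' u) := by
  induction u using t.wellFounded_child_s11.induction with
  | _ c ih =>
    by_cases hs : ∃ i ≤ k, anc i = c
    · obtain ⟨i, hi, rfl⟩ := hs
      rw [spineLift_anc hstep hi]
      exact (hsub i hi).bisimilar
    · -- `c` is not the root, which lies on the spine
      obtain ⟨p, hpc⟩ : ∃ p, t.child p c := by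
        cases (t.reachable c).cases_tail with
        | inl h => exact absurd ⟨k, le_rfl, hak.trans h.symm⟩ hs
        | inr h => exact h.imp fun _ => And.right
      rw [spineLift_of_not_mem_spine hs hpc]
      exact ((ih p hpc).bisimChild_spec hpc).2

theorem spineLift_child (hstep : ∀ i < k, t.child (anc (i + 1)) (anc i))
    (hak : anc k = t.root) (hstep' : ∀ i < k, t'.child (anc' (i + 1)) (anc' i))
    (hsub : ∀ i ≤ k, SubtreeBisim t t' (anc i) (anc' i)) {u c : t.V} (huc : t.child u c) :
    t'.child (spineLift t t' k anc anc' u) (spineLift t t' k anc anc' c) := by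
  by_cases hs : ∃ i ≤ k, anc i = c
  · obtain ⟨i, hi, rfl⟩ := hs
    have hik : i < k := lt_of_le_of_ne hi (by
      rintro rfl
      exact t.root_no_parent u (hak ▸ huc))
    rw [t.parent_unique huc (hstep i hik), spineLift_anc hstep hi, spineLift_anc hstep hik]
    exact hstep' i hik
  · rw [spineLift_of_not_mem_spine hs huc]
    exact ((bisimilar_spineLift hstep hak hsub u).bisimChild_spec huc).1

end SpineLift

theorem hom_from_ancestorwise_bisimilar_general {P : Type} (t t' : URTree P)
    (k : ℕ) (a : t.V) (b : t'.V)
    (anc : ℕ → t.V) (anc' : ℕ → t'.V)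
    (ha0 : anc 0 = a) (hak : anc k = t.root)
    (hstep : ∀ i < k, t.child (anc (i + 1)) (anc i))
    (hb0 : anc' 0 = b)
    (hstep' : ∀ i < k, t'.child (anc' (i + 1)) (anc' i))
    (hsub : ∀ i ≤ k, SubtreeBisim t t' (anc i) (anc' i)) :
    ∃ h : t.V → t'.V, THom t t' h ∧ h a = b := by
  refine ⟨spineLift t t' k anc anc', ⟨fun p u hu => ?_, fun u c => ?_⟩, ?_⟩
  · exact ((bisimilar_spineLift hstep hak hsub u).label_iff p).mp hu
  · exact spineLift_child hstep hak hstep' hsub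
  · rw [← ha0, ← hb0]
    exact spineLift_anc hstep (Nat.zero_le k)

/-- if the roots of `t` and `t'` are bisimilar, `a` is a node of `t` at depth
`k` with ancestor chain `anc` (where `anc i` is the `i`-th ancestor of `a`), `b` is a node of
`t'` at depth `k` with ancestor chain `anc'`, and for each `i ≤ k` the subtree rooted at the
`i`-th ancestor of `a` is root-to-root bisimilar to the subtree rooted at the `i`-th ancestor
of `b`, then there is a homomorphism `h : t → t'` with `h a = b`. -/
theorem hom_from_ancestorwise_bisimilar {P : Type} (t t' : URTree P)
    (hroot : SubtreeBisim t t' t.root t'.root)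
    (k : ℕ) (a : t.V) (b : t'.V)
    (anc : ℕ → t.V) (anc' : ℕ → t'.V)
    (ha0 : anc 0 = a) (hak : anc k = t.root)
    (hstep : ∀ i < k, t.child (anc (i + 1)) (anc i))
    (hb0 : anc' 0 = b) (hbk : anc' k = t'.root)
    (hstep' : ∀ i < k, t'.child (anc' (i + 1)) (anc' i))
    (hsub : ∀ i ≤ k, SubtreeBisim t t' (anc i) (anc' i)) :
    ∃ h : t.V → t'.V, THom t t' h ∧ h a = b :=
  hom_from_ancestorwise_bisimilar_general t t' k a b anc anc' ha0 hak hstep hb0 hstep' hsub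
end

section
/- For any acyclic connected relational structure N (i.e., inc(N) is a tree and no element occurs twice in a fact), there exists a tree T(N) whose nodes are labeled by the facts of N such that: (i) each fact of N labels exactly one node of T(N); (ii) if node u is the parent of node v in T(N), then the facts labeling u and v share at most one element of N; and (iii) if the facts labeling two nodes u and v share an element, then u and v are siblings or one is the parent of the other. -/
/-- An interpretation of a relational signature `(σ, ar)` over a domain `α`. -/
def Itp (σ : Type) (ar : σ → ℕ) (α : Type) : Type :=
  ∀ r : σ, (Fin (ar r) → α) → Prop

/-- A (potential) fact over domain `α`: a relation symbol together with a tuple. -/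
def AFact (σ : Type) (ar : σ → ℕ) (α : Type) : Type := Σ r : σ, Fin (ar r) → α

/-- The incidence graph of a structure: a bipartite graph on facts and elements, with an edge
between a fact of the structure and each element occurring in it. -/
def IncG {σ : Type} {ar : σ → ℕ} {α : Type} (M : Itp σ ar α) :
    SimpleGraph (AFact σ ar α ⊕ α) where
  Adj x y :=
    (∃ f a, x = Sum.inl f ∧ y = Sum.inr a ∧ M f.1 f.2 ∧ a ∈ Set.range f.2) ∨
    (∃ f a, y = Sum.inl f ∧ x = Sum.inr a ∧ M f.1 f.2 ∧ a ∈ Set.range f.2)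
  symm := by
    constructor
    intro x y h
    rcases h with h | h
    · exact Or.inr h
    · exact Or.inl h
  loopless := by
    constructor
    rintro x (⟨f, a, h1, h2, -, -⟩ | ⟨f, a, h1, h2, -, -⟩) <;>
      (subst h1; exact Sum.inl_ne_inr h2)

/-- No element occurs twice in any fact of `M`. -/
def NoRepeat {σ : Type} {ar : σ → ℕ} {α : Type} (M : Itp σ ar α) : Prop :=
  ∀ (r : σ) (t : Fin (ar r) → α), M r t → Function.Injective t

/-- The elements occurring in a fact. -/
def elemsOf {σ : Type} {ar : σ → ℕ} {α : Type} (f : AFact σ ar α) : Set α :=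
  Set.range f.2

/-!
Root the forest `inc(N)` at a fact `r` and let the parent of a fact `f ≠ r` be its grandparent
in the rooted incidence tree, i.e. the fact two steps closer to `r` on the unique path from `f`.
Two distinct facts sharing two elements would close a 4-cycle, so a fact and its parent share
at most one element. If `f` and `g` share an element `a`, each of them is either the parent or a
child of `a` in the rooted tree, and the four cases give "siblings" or "one is the parent of the
other".
-/

namespace SimpleGraph

variable {V : Type*} {G : SimpleGraph V} {r u v w : V}

open Classical in
/-- The neighbour of `v` on the path from `v` to `r`; `v` itself if there is no such path. -/
noncomputable def stepTowards (G : SimpleGraph V) (r v : V) : V :=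
  if h : ∃ p : G.Walk v r, p.IsPath then h.choose.snd else v

lemma IsAcyclic.stepTowards_eq_snd (hG : G.IsAcyclic) {p : G.Walk v r} (hp : p.IsPath) :
    G.stepTowards r v = p.snd := by
  have h : ∃ p : G.Walk v r, p.IsPath := ⟨p, hp⟩
  rw [stepTowards, dif_pos h]
  exact congrArg (fun q : G.Path v r => q.1.snd)
    ((hG.subsingleton_path v r).elim ⟨_, h.choose_spec⟩ ⟨p, hp⟩)

lemma IsAcyclic.stepTowards_self (hG : G.IsAcyclic) (r : V) : G.stepTowards r r = r :=
  hG.stepTowards_eq_snd Walk.IsPath.nil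

lemma IsAcyclic.adj_stepTowards (hG : G.IsAcyclic) (hv : G.Reachable v r) (hvr : v ≠ r) :
    G.Adj v (G.stepTowards r v) := by
  obtain ⟨p, hp⟩ := hv.exists_isPath
  rw [hG.stepTowards_eq_snd hp]
  exact p.adj_snd (Walk.not_nil_of_ne hvr)

lemma IsAcyclic.reachable_stepTowards (hG : G.IsAcyclic) (hv : G.Reachable v r) :
    G.Reachable (G.stepTowards r v) r := by
  by_cases hvr : v = r
  · rw [hvr, hG.stepTowards_self]
  · exact (hG.adj_stepTowards hv hvr).reachable.symm.trans hv

lemma IsAcyclic.stepTowards_eq_or_stepTowards_eq_of_adj (hG : G.IsAcyclic)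
    (hv : G.Reachable v r) (hvw : G.Adj v w) :
    G.stepTowards r v = w ∨ G.stepTowards r w = v := by
  obtain ⟨p, hp⟩ := hv.exists_isPath
  by_cases hw : w ∈ p.support
  · exact .inl ((hG.stepTowards_eq_snd hp).trans (hG.eq_snd_of_adj_start hp hvw hw).symm)
  · exact .inr ((hG.stepTowards_eq_snd (hp.cons hw) (p := .cons hvw.symm p)).trans (p.snd_cons _))

lemma IsAcyclic.iterate_two_stepTowards_ne (hG : G.IsAcyclic) (hv : G.Reachable v r)
    (hvr : v ≠ r) : (G.stepTowards r)^[2] v ≠ v := by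
  obtain ⟨p, hp⟩ := hv.exists_isPath
  have hnil : ¬ p.Nil := Walk.not_nil_of_ne hvr
  rw [Function.iterate_succ_apply, Function.iterate_one, hG.stepTowards_eq_snd hp,
    hG.stepTowards_eq_snd hp.tail]
  have hv : v ∉ p.tail.support := ((Walk.cons_isPath_iff _ _).mp (p.cons_tail_eq hnil ▸ hp)).2
  exact ne_of_mem_of_not_mem (p.tail.getVert_mem_support 1) hv

lemma IsAcyclic.iterate_stepTowards_of_isPath (hG : G.IsAcyclic) {p : G.Walk v r}
    (hp : p.IsPath) {n : ℕ} (hn : p.length ≤ n) : (G.stepTowards r)^[n] v = r := by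
  induction p generalizing n with
  | nil => exact Function.iterate_fixed (hG.stepTowards_self _) n
  | cons h q ih =>
    cases n with
    | zero => simp at hn
    | succ n =>
      rw [Function.iterate_succ_apply, hG.stepTowards_eq_snd hp, Walk.snd_cons]
      exact ih hp.of_cons (by simpa using hn)

lemma IsAcyclic.iterate_two_stepTowards_eq_or_of_adj_of_adj (hG : G.IsAcyclic)
    (hu : G.Reachable u r) (hua : G.Adj u v) (hwv : G.Adj w v) :
    (G.stepTowards r)^[2] u = (G.stepTowards r)^[2] w ∨ (G.stepTowards r)^[2] u = w ∨
      (G.stepTowards r)^[2] w = u := by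
  have hw : G.Reachable w r := hwv.reachable.trans (hua.symm.reachable.trans hu)
  simp only [Function.iterate_succ, Function.iterate_zero, Function.comp_apply, id_eq]
  rcases hG.stepTowards_eq_or_stepTowards_eq_of_adj hu hua with hu' | hu' <;>
    rcases hG.stepTowards_eq_or_stepTowards_eq_of_adj hw hwv with hw' | hw'
  · exact .inl (by rw [hu', hw'])
  · exact .inr (.inl (by rw [hu', hw']))
  · exact .inr (.inr (by rw [hw', hu']))
  · exact .inl (by rw [← hu'.symm.trans hw'])

lemma IsAcyclic.commonNeighbors_subsingleton (hG : G.IsAcyclic) (huw : u ≠ w) :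
    (G.commonNeighbors u w).Subsingleton := by
  rintro a ⟨hua, haw⟩ b ⟨hub, hbw⟩
  have hpath : ∀ {c : V} (huc : G.Adj u c) (hcw : G.Adj c w),
      (Walk.cons huc (Walk.cons hcw Walk.nil)).IsPath := by
    intro c huc hcw
    simp [huc.ne, hcw.ne, huw]
  have := (hG.subsingleton_path u w).elim ⟨_, hpath hua haw.symm⟩ ⟨_, hpath hub hbw.symm⟩
  exact congrArg (fun q : G.Path u w => q.1.snd) this

end SimpleGraph

variable {σ : Type} {ar : σ → ℕ} {α : Type} {N : Itp σ ar α}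

abbrev Itp.Facts (N : Itp σ ar α) : Type := {f : AFact σ ar α // N f.1 f.2}

namespace IncG

lemma adj_inl_inr {f : AFact σ ar α} {a : α} (hf : N f.1 f.2) (ha : a ∈ elemsOf f) :
    (IncG N).Adj (Sum.inl f) (Sum.inr a) :=
  .inl ⟨f, a, rfl, rfl, hf, ha⟩

lemma exists_eq_inr_of_adj_inl {f : AFact σ ar α} {y : AFact σ ar α ⊕ α}
    (h : (IncG N).Adj (Sum.inl f) y) : ∃ a, y = Sum.inr a := by
  rcases h with ⟨_, a, _, rfl, _⟩ | ⟨_, _, _, h, _⟩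
  · exact ⟨a, rfl⟩
  · exact (Sum.inl_ne_inr h).elim

lemma exists_eq_inl_of_adj_inr {a : α} {y : AFact σ ar α ⊕ α}
    (h : (IncG N).Adj (Sum.inr a) y) : ∃ g : N.Facts, y = Sum.inl g.1 := by
  rcases h with ⟨_, _, h, _⟩ | ⟨g, _, rfl, _, hg, _⟩
  · exact (Sum.inr_ne_inl h).elim
  · exact ⟨⟨g, hg⟩, rfl⟩

lemma elemsOf_inter_subsingleton (hacyc : (IncG N).IsAcyclic) {f g : AFact σ ar α}
    (hf : N f.1 f.2) (hg : N g.1 g.2) (hfg : f ≠ g) : (elemsOf f ∩ elemsOf g).Subsingleton :=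
  ((hacyc.commonNeighbors_subsingleton (Sum.inl_injective.ne hfg)).preimage
    Sum.inr_injective).anti fun _ ⟨haf, hag⟩ => ⟨adj_inl_inr hf haf, adj_inl_inr hg hag⟩

lemma reachable_of_reflTransGen {f g : N.Facts}
    (h : Relation.ReflTransGen (fun x y : N.Facts => (elemsOf x.1 ∩ elemsOf y.1).Nonempty) f g) :
    (IncG N).Reachable (Sum.inl f.1) (Sum.inl g.1) := by
  rw [SimpleGraph.reachable_iff_reflTransGen]
  refine h.lift' (fun x : N.Facts => (Sum.inl x.1 : AFact σ ar α ⊕ α)) ?_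
  rintro x y ⟨a, hax, hay⟩
  exact .tail (.single (adj_inl_inr x.2 hax)) (adj_inl_inr y.2 hay).symm

/-- `IncG N` is bipartite, so two steps towards a fact lead from a fact to a fact. -/
lemma exists_inl_eq_iterate_two_stepTowards (hacyc : (IncG N).IsAcyclic) {root f : N.Facts}
    (hf : (IncG N).Reachable (Sum.inl f.1) (Sum.inl root.1)) :
    ∃ g : N.Facts, Sum.inl g.1 = ((IncG N).stepTowards (Sum.inl root.1))^[2] (Sum.inl f.1) := by
  by_cases hfr : f = root
  · exact ⟨root, by rw [hfr, Function.iterate_fixed (hacyc.stepTowards_self _)]⟩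
  have hfr' : (Sum.inl f.1 : AFact σ ar α ⊕ α) ≠ Sum.inl root.1 :=
    fun h => hfr (Subtype.ext (Sum.inl_injective h))
  obtain ⟨a, ha⟩ := exists_eq_inr_of_adj_inl (hacyc.adj_stepTowards hf hfr')
  have ha_reach := hacyc.reachable_stepTowards hf
  rw [ha] at ha_reach
  obtain ⟨g, hg⟩ := exists_eq_inl_of_adj_inr (hacyc.adj_stepTowards ha_reach Sum.inr_ne_inl)
  exact ⟨g, by rw [Function.iterate_succ_apply', Function.iterate_one, ha, hg]⟩

end IncG

theorem acyclic_connected_structure_has_fact_tree_general {σ : Type} {ar : σ → ℕ} {α : Type}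
    (N : Itp σ ar α)
    (hacyc : (IncG N).IsAcyclic)
    (hne : Nonempty {f : AFact σ ar α // N f.1 f.2})
    (hconn : ∀ f : {f : AFact σ ar α // N f.1 f.2}, ∀ g : {f : AFact σ ar α // N f.1 f.2},
      Relation.ReflTransGen
        (fun x y : {f : AFact σ ar α // N f.1 f.2} =>
          (elemsOf x.1 ∩ elemsOf y.1).Nonempty) f g) :
    ∃ (root : {f : AFact σ ar α // N f.1 f.2})
      (par : {f : AFact σ ar α // N f.1 f.2} → {f : AFact σ ar α // N f.1 f.2}),
      par root = root ∧
      (∀ f, ∃ n : ℕ, par^[n] f = root) ∧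
      (∀ f, f ≠ root → Set.Subsingleton (elemsOf f.1 ∩ elemsOf (par f).1)) ∧
      (∀ f g, (elemsOf f.1 ∩ elemsOf g.1).Nonempty →
        par f = par g ∨ par f = g ∨ par g = f) := by
  obtain ⟨root⟩ := hne
  have hreach (f : N.Facts) : (IncG N).Reachable (Sum.inl f.1) (Sum.inl root.1) :=
    IncG.reachable_of_reflTransGen (hconn f root)
  choose par hpar using fun f => IncG.exists_inl_eq_iterate_two_stepTowards hacyc (hreach f)
  set toVertex : N.Facts → AFact σ ar α ⊕ α := fun f => Sum.inl f.1
  have hinj : Function.Injective toVertex := Sum.inl_injective.comp Subtype.val_injective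
  have hsemi : Function.Semiconj toVertex par ((IncG N).stepTowards (toVertex root))^[2] := hpar
  refine ⟨root, par, hinj ?_, fun f => ?_, fun f hf => ?_, fun f g ⟨a, haf, hag⟩ => ?_⟩
  · exact (hpar root).trans (Function.iterate_fixed (hacyc.stepTowards_self _) 2)
  · obtain ⟨p, hp⟩ := (hreach f).exists_isPath
    refine ⟨p.length, hinj ?_⟩
    rw [hsemi.iterate_right p.length f, ← Function.iterate_mul]
    exact hacyc.iterate_stepTowards_of_isPath hp (by omega)
  · refine IncG.elemsOf_inter_subsingleton hacyc f.2 (par f).2 fun h => ?_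
    exact hacyc.iterate_two_stepTowards_ne (hreach f) (hinj.ne hf) (by rw [← hpar f, h])
  · have := hacyc.iterate_two_stepTowards_eq_or_of_adj_of_adj (hreach f)
      (IncG.adj_inl_inr f.2 haf) (IncG.adj_inl_inr g.2 hag)
    rw [← hpar f, ← hpar g] at this
    simpa only [Sum.inl.injEq, Subtype.val_inj] using this

/-- for every acyclic connected structure `N` there is a tree `T(N)` whose
nodes are (in bijection with) the facts of `N` — here we take the nodes to *be* the facts,
organized by a parent function `par` with a root — such that: every node reaches the root by
iterating `par` (so `T(N)` is a tree in which each fact labels exactly one node); a node and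
its parent share at most one element; and any two facts sharing an element are siblings or
one is the parent of the other. -/
theorem acyclic_connected_structure_has_fact_tree {σ : Type} {ar : σ → ℕ} {α : Type}
    (N : Itp σ ar α)
    (hnr : NoRepeat N)
    (hacyc : (IncG N).IsAcyclic)
    (hne : Nonempty {f : AFact σ ar α // N f.1 f.2})
    (hconn : ∀ f : {f : AFact σ ar α // N f.1 f.2}, ∀ g : {f : AFact σ ar α // N f.1 f.2},
      Relation.ReflTransGen
        (fun x y : {f : AFact σ ar α // N f.1 f.2} =>
          (elemsOf x.1 ∩ elemsOf y.1).Nonempty) f g) :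
    ∃ (root : {f : AFact σ ar α // N f.1 f.2})
      (par : {f : AFact σ ar α // N f.1 f.2} → {f : AFact σ ar α // N f.1 f.2}),
      par root = root ∧
      (∀ f, ∃ n : ℕ, par^[n] f = root) ∧
      (∀ f, f ≠ root → Set.Subsingleton (elemsOf f.1 ∩ elemsOf (par f).1)) ∧
      (∀ f g, (elemsOf f.1 ∩ elemsOf g.1).Nonempty →
        par f = par g ∨ par f = g ∨ par g = f) :=
  acyclic_connected_structure_has_fact_tree_general N hacyc hne hconn
end

section
/- UNFO cannot express inequality: there is no UNFO formula φ(x,y) over any signature that is equivalent to x ≠ y on all structures. More precisely, the formula x ≠ y is not preserved under UN-homomorphisms, whereas every UNFO formula is; a witnessing pair is the map from the two-element structure with no relations (over the empty relational signature) to the one-element structure, which is a UN-homomorphism but does not preserve x ≠ y. -/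
/-- First-order formulas (with equality) over signature `(σ, ar)`, variables from `ℕ`. -/
inductive FOF (σ : Type) (ar : σ → ℕ) where
  | rel : (r : σ) → (Fin (ar r) → ℕ) → FOF σ ar
  | eq : ℕ → ℕ → FOF σ ar
  | and : FOF σ ar → FOF σ ar → FOF σ ar
  | or : FOF σ ar → FOF σ ar → FOF σ ar
  | not : FOF σ ar → FOF σ ar
  | ex : ℕ → FOF σ ar → FOF σ ar

/-- Free variables of a formula. -/
def FOF.fv {σ : Type} {ar : σ → ℕ} : FOF σ ar → Finset ℕ
  | .rel _ t => Finset.image t Finset.univ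
  | .eq x y => {x, y}
  | .and φ ψ => φ.fv ∪ ψ.fv
  | .or φ ψ => φ.fv ∪ ψ.fv
  | .not φ => φ.fv
  | .ex x φ => φ.fv.erase x

/-- UNFO formulas: negation is applied only to subformulas with at most one free variable. -/
def FOF.IsUNFO {σ : Type} {ar : σ → ℕ} : FOF σ ar → Prop
  | .rel _ _ => True
  | .eq _ _ => True
  | .and φ ψ => φ.IsUNFO ∧ ψ.IsUNFO
  | .or φ ψ => φ.IsUNFO ∧ ψ.IsUNFO
  | .not φ => φ.IsUNFO ∧ φ.fv.card ≤ 1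
  | .ex _ φ => φ.IsUNFO

/-- Satisfaction under a valuation. -/
def FOF.sat {σ : Type} {ar : σ → ℕ} {α : Type} (I : Itp σ ar α) (v : ℕ → α) :
    FOF σ ar → Prop
  | .rel r t => I r (fun i => v (t i))
  | .eq x y => v x = v y
  | .and φ ψ => φ.sat I v ∧ ψ.sat I v
  | .or φ ψ => φ.sat I v ∨ ψ.sat I v
  | .not φ => ¬ φ.sat I v
  | .ex x φ => ∃ d : α, φ.sat I (Function.update v x d)

/-- Partial homomorphism with domain `X`. -/
def IsPartialHomI {σ : Type} {ar : σ → ℕ} {α β : Type} (I : Itp σ ar α) (J : Itp σ ar β)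
    (X : Set α) (h : α → β) : Prop :=
  ∀ (r : σ) (t : Fin (ar r) → α), (∀ i, t i ∈ X) → I r t → J r (h ∘ t)

/-- UN-bisimulation between interpretations. -/
def IsUNBisimI {σ : Type} {ar : σ → ℕ} {α β : Type} (I : Itp σ ar α) (J : Itp σ ar β)
    (Z : α → β → Prop) : Prop :=
  ∀ a b, Z a b →
    (∀ X : Set α, X.Finite →
      ∃ h : α → β, IsPartialHomI I J X h ∧ (a ∈ X → h a = b) ∧ ∀ x ∈ X, Z x (h x)) ∧
    (∀ Y : Set β, Y.Finite →
      ∃ g : β → α, IsPartialHomI J I Y g ∧ (b ∈ Y → g b = a) ∧ ∀ y ∈ Y, Z (g y) y)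

/-- Homomorphism of interpretations. -/
def IsHomI {σ : Type} {ar : σ → ℕ} {α β : Type} (I : Itp σ ar α) (J : Itp σ ar β)
    (h : α → β) : Prop :=
  ∀ (r : σ) (t : Fin (ar r) → α), I r t → J r (h ∘ t)

/-- UN-homomorphism: a homomorphism relating each element to its image by a
UN-bisimulation. -/
def IsUNHomI {σ : Type} {ar : σ → ℕ} {α β : Type} (I : Itp σ ar α) (J : Itp σ ar β)
    (h : α → β) : Prop :=
  IsHomI I J h ∧ ∀ a : α, ∃ Z : α → β → Prop, IsUNBisimI I J Z ∧ Z a (h a)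

/-- The empty relational signature. -/
def emptyAr : Empty → ℕ := fun e => nomatch e

/-- A structure over the empty signature on domain `α`. -/
def emptyItp (α : Type) : Itp Empty emptyAr α := fun r => nomatch r


/-!
A UNFO formula true of `v` in `I` only inspects finitely many elements, and its truth is
carried to `J` by any partial homomorphism on them that stays inside a UN-bisimulation `Z`.
Negation is the one delicate case: a negated subformula has at most one free variable `x`,
so if it held in `J` at `h ∘ v`, the back condition of `Z` at `(v x, h (v x))` would pull it
back to `I` at `v`. A UN-homomorphism is such a partial homomorphism on every finite set, so UNFO
is preserved under UN-homomorphisms. The map from two points to one point without relations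
is a UN-homomorphism that identifies two distinct elements, so `x ≠ y` is not preserved.
-/

section

variable {σ : Type} {ar : σ → ℕ} {α β : Type} {I : Itp σ ar α} {J : Itp σ ar β}

def Itp.IsFull (I : Itp σ ar α) : Prop :=
  ∀ r t, I r t

theorem emptyItp_isFull (α : Type) : (emptyItp α).IsFull :=
  fun r => r.elim

theorem IsPartialHomI.mono {X Y : Set α} {h : α → β} (hXY : X ⊆ Y)
    (hh : IsPartialHomI I J Y h) : IsPartialHomI I J X h :=
  fun r t ht => hh r t fun i => hXY (ht i)

theorem IsHomI.isPartialHomI {h : α → β} (hh : IsHomI I J h) (X : Set α) :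
    IsPartialHomI I J X h :=
  fun r t _ => hh r t

theorem isPartialHomI_of_isFull (hJ : J.IsFull) (X : Set α) (h : α → β) :
    IsPartialHomI I J X h :=
  fun r _ _ _ => hJ r _

theorem IsUNBisimI.flip {Z : α → β → Prop} (hZ : IsUNBisimI I J Z) :
    IsUNBisimI J I (Function.swap Z) :=
  fun b a hab => ⟨(hZ a b hab).2, (hZ a b hab).1⟩

theorem isUNBisimI_iSup {ι : Type*} {Z : ι → α → β → Prop} (hZ : ∀ i, IsUNBisimI I J (Z i)) :
    IsUNBisimI I J (fun a b => ∃ i, Z i a b) := by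
  rintro a b ⟨i, hab⟩
  constructor
  · intro X hX
    obtain ⟨h, hh, hha, hhZ⟩ := (hZ i a b hab).1 X hX
    exact ⟨h, hh, hha, fun x hx => ⟨i, hhZ x hx⟩⟩
  · intro Y hY
    obtain ⟨g, hg, hgb, hgZ⟩ := (hZ i a b hab).2 Y hY
    exact ⟨g, hg, hgb, fun y hy => ⟨i, hgZ y hy⟩⟩

theorem isUNBisimI_top_of_isFull (hI : I.IsFull) (hJ : J.IsFull) :
    IsUNBisimI I J (fun _ _ => True) := fun a b _ =>
  ⟨fun X _ => ⟨fun _ => b, isPartialHomI_of_isFull hJ X _, fun _ => rfl, fun _ _ => trivial⟩,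
    fun Y _ => ⟨fun _ => a, isPartialHomI_of_isFull hI Y _, fun _ => rfl, fun _ _ => trivial⟩⟩

theorem isUNHomI_of_isFull (hI : I.IsFull) (hJ : J.IsFull) (h : α → β) : IsUNHomI I J h :=
  ⟨fun r _ _ => hJ r _, fun _ => ⟨_, isUNBisimI_top_of_isFull hI hJ, trivial⟩⟩

theorem FOF.sat_congr {φ : FOF σ ar} {v w : ℕ → α} (hvw : ∀ x ∈ φ.fv, v x = w x) :
    φ.sat I v ↔ φ.sat I w := by
  induction φ generalizing v w with
  | rel =>
    simp only [FOF.sat]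
    congr! 2 with i
    exact hvw _ (by simp [FOF.fv])
  | eq x y => simp only [FOF.sat, hvw x (by simp [FOF.fv]), hvw y (by simp [FOF.fv])]
  | and φ ψ ihφ ihψ =>
    simp only [FOF.fv, Finset.mem_union] at hvw
    simp only [FOF.sat, ihφ fun x hx => hvw x (.inl hx), ihψ fun x hx => hvw x (.inr hx)]
  | or φ ψ ihφ ihψ =>
    simp only [FOF.fv, Finset.mem_union] at hvw
    simp only [FOF.sat, ihφ fun x hx => hvw x (.inl hx), ihψ fun x hx => hvw x (.inr hx)]
  | not φ ih => simp only [FOF.sat, ih hvw]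
  | ex x φ ih =>
    simp only [FOF.fv, Finset.mem_erase] at hvw
    refine exists_congr fun d => ih fun y hy => ?_
    rcases eq_or_ne y x with rfl | hyx
    · simp
    · simp [Function.update_of_ne hyx, hvw y ⟨hyx, hy⟩]

def FOF.TransfersOn (I : Itp σ ar α) (J : Itp σ ar β) (Z : α → β → Prop) (φ : FOF σ ar)
    (v : ℕ → α) (D : Set α) : Prop :=
  ∀ h : α → β, IsPartialHomI I J D h → (∀ c ∈ D, Z c (h c)) → φ.sat J (h ∘ v)

theorem FOF.TransfersOn.mono {Z : α → β → Prop} {φ : FOF σ ar} {v : ℕ → α} {D D' : Set α}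
    (hDD' : D ⊆ D') (hD : φ.TransfersOn I J Z v D) : φ.TransfersOn I J Z v D' :=
  fun h hh hZ => hD h (hh.mono hDD') fun c hc => hZ c (hDD' hc)

theorem FOF.IsUNFO.exists_transfersOn {φ : FOF σ ar} (hφ : φ.IsUNFO) {Z : α → β → Prop}
    (hZ : IsUNBisimI I J Z) (hZne : ∃ a b, Z a b) {v : ℕ → α} (hv : φ.sat I v) :
    ∃ D : Set α, D.Finite ∧ v '' φ.fv ⊆ D ∧ φ.TransfersOn I J Z v D := by
  induction φ generalizing α β I J Z v with
  | rel r t =>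
    refine ⟨v '' (rel r t : FOF σ ar).fv, Finset.finite_toSet _ |>.image v, subset_rfl, ?_⟩
    intro h hh _
    exact hh r (fun i => v (t i)) (fun i => ⟨t i, by simp [FOF.fv], rfl⟩) hv
  | eq x y =>
    exact ⟨v '' (eq x y : FOF σ ar).fv, Finset.finite_toSet _ |>.image v, subset_rfl,
      fun h _ _ => congrArg h hv⟩
  | and φ ψ ihφ ihψ =>
    obtain ⟨D₁, hD₁, hvD₁, hφD₁⟩ := ihφ hφ.1 hZ hZne hv.1
    obtain ⟨D₂, hD₂, hvD₂, hψD₂⟩ := ihψ hφ.2 hZ hZne hv.2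
    refine ⟨D₁ ∪ D₂, hD₁.union hD₂, ?_, fun h hh hhZ => ⟨?_, ?_⟩⟩
    · simp only [FOF.fv, Finset.coe_union, Set.image_union]
      exact Set.union_subset_union hvD₁ hvD₂
    · exact hφD₁.mono Set.subset_union_left h hh hhZ
    · exact hψD₂.mono Set.subset_union_right h hh hhZ
  | or φ ψ ihφ ihψ =>
    have hfin : (v '' (or φ ψ : FOF σ ar).fv).Finite := Finset.finite_toSet _ |>.image v
    rcases hv with hv | hv
    · obtain ⟨D, hD, -, hφD⟩ := ihφ hφ.1 hZ hZne hv
      exact ⟨D ∪ _, hD.union hfin, Set.subset_union_right,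
        fun h hh hhZ => .inl (hφD.mono Set.subset_union_left h hh hhZ)⟩
    · obtain ⟨D, hD, -, hψD⟩ := ihψ hφ.2 hZ hZne hv
      exact ⟨D ∪ _, hD.union hfin, Set.subset_union_right,
        fun h hh hhZ => .inr (hψD.mono Set.subset_union_left h hh hhZ)⟩
  | not φ ih =>
    refine ⟨v '' φ.fv, Finset.finite_toSet _ |>.image v, subset_rfl, fun h hh hhZ hJφ => hv ?_⟩
    obtain ⟨D', hD', hvD', hφD'⟩ :=
      ih hφ.1 hZ.flip (hZne.elim fun a ⟨b, hab⟩ => ⟨b, a, hab⟩) hJφ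
    -- `φ` has at most one free variable, so one pair of `Z` covers all of them
    obtain ⟨a, b, hab, hfv⟩ : ∃ a b, Z a b ∧ ∀ y ∈ φ.fv, v y = a ∧ h (v y) = b := by
      rcases φ.fv.eq_empty_or_nonempty with hfv | ⟨x, hx⟩
      · obtain ⟨a, b, hab⟩ := hZne
        exact ⟨a, b, hab, by simp [hfv]⟩
      · refine ⟨v x, h (v x), hhZ _ ⟨x, hx, rfl⟩, fun y hy => ?_⟩
        obtain rfl := Finset.card_le_one.mp hφ.2 y hy x hx
        exact ⟨rfl, rfl⟩
    obtain ⟨g, hg, hgb, hgZ⟩ := (hZ a b hab).2 D' hD'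
    refine (FOF.sat_congr fun y hy => ?_).mp (hφD' g hg hgZ)
    obtain ⟨rfl, hyb⟩ := hfv y hy
    have hbD' : b ∈ D' := hyb ▸ hvD' ⟨y, hy, rfl⟩
    simp only [Function.comp_apply, hyb, hgb hbD']
  | ex x φ ih =>
    obtain ⟨d, hd⟩ := hv
    obtain ⟨D, hD, -, hφD⟩ := ih hφ hZ hZne hd
    refine ⟨D ∪ _, hD.union (Finset.finite_toSet _ |>.image v), Set.subset_union_right,
      fun h hh hhZ => ⟨h d, ?_⟩⟩
    rw [← Function.comp_update]
    exact hφD.mono Set.subset_union_left h hh hhZ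

theorem FOF.IsUNFO.sat_comp {φ : FOF σ ar} (hφ : φ.IsUNFO) {h : α → β} (hh : IsUNHomI I J h)
    {v : ℕ → α} (hv : φ.sat I v) : φ.sat J (h ∘ v) := by
  -- each `a` may be related to `h a` by a different UN-bisimulation; their union serves all
  let Z : α → β → Prop := fun a b => ∃ Z' : {Z' // IsUNBisimI I J Z'}, Z'.1 a b
  have hZ : IsUNBisimI I J Z := isUNBisimI_iSup fun Z' => Z'.2
  have hhZ : ∀ a, Z a (h a) := fun a =>
    let ⟨Z', hZ', ha⟩ := hh.2 a
    ⟨⟨Z', hZ'⟩, ha⟩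
  obtain ⟨D, -, -, hφD⟩ := hφ.exists_transfersOn hZ ⟨v 0, h (v 0), hhZ _⟩ hv
  exact hφD h (hh.1.isPartialHomI D) fun c _ => hhZ c

theorem FOF.IsUNFO.not_forall_sat_iff_ne {φ : FOF σ ar} (hφ : φ.IsUNFO) :
    ¬ ∀ (α : Type) (I : Itp σ ar α) (v : ℕ → α), φ.sat I v ↔ v 0 ≠ v 1 := by
  intro hφne
  have hfull (α : Type) : Itp.IsFull (fun _ _ => True : Itp σ ar α) := fun _ _ => trivial
  have hv : φ.sat (fun _ _ => True) (fun n => decide (n = 0)) := (hφne Bool _ _).2 (by decide)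
  have hcollapse := isUNHomI_of_isFull (hfull Bool) (hfull Unit) fun _ => ()
  exact (hφne Unit _ _).1 (hφ.sat_comp hcollapse hv) rfl

end

/-- UNFO cannot express inequality.  No UNFO formula `φ(x,y)` over any
signature is equivalent to `x ≠ y` (variables `0` and `1`); every UNFO formula is preserved
under UN-homomorphisms, whereas `x ≠ y` is not: the map from the two-element structure over
the empty signature to the one-element structure is a UN-homomorphism (indeed the total
relation is a UN-bisimulation) but does not preserve inequality. -/
theorem unfo_cannot_express_inequality :
    (∀ (σ : Type) (ar : σ → ℕ) (φ : FOF σ ar), φ.IsUNFO →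
      ¬ ∀ (α : Type) (I : Itp σ ar α) (v : ℕ → α), φ.sat I v ↔ v 0 ≠ v 1) ∧
    (∀ (σ : Type) (ar : σ → ℕ) (α β : Type) (I : Itp σ ar α) (J : Itp σ ar β) (h : α → β),
      IsUNHomI I J h → ∀ φ : FOF σ ar, φ.IsUNFO →
        ∀ v : ℕ → α, φ.sat I v → φ.sat J (h ∘ v)) ∧
    IsUNBisimI (emptyItp Bool) (emptyItp Unit) (fun _ _ => True) ∧
    IsUNHomI (emptyItp Bool) (emptyItp Unit) (fun _ => ()) ∧
    (∃ a b : Bool, a ≠ b ∧ (fun _ : Bool => ()) a = (fun _ : Bool => ()) b) :=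
  ⟨fun _ _ _ hφ => hφ.not_forall_sat_iff_ne,
    fun _ _ _ _ _ _ _ hh _ hφ _ hv => hφ.sat_comp hh hv,
    isUNBisimI_top_of_isFull (emptyItp_isFull Bool) (emptyItp_isFull Unit),
    isUNHomI_of_isFull (emptyItp_isFull Bool) (emptyItp_isFull Unit) _,
    ⟨true, false, Bool.noConfusion, rfl⟩⟩
end
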